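/- arXiv:2510.19762 — 2 statements merged into one kernel-verified Lean document; each statement's English description precedes it below -/
import Mathlib

section
/- Define g : ℝ³ → ℝ by g(a, b, c) = |a| + |a − b| + |1/2 + a − c| + |b| + |b + c − 2| + |b + c|. Then g(a, b, c) ≥ 2 for all (a, b, c) ∈ ℝ³, and equality holds if and only if (a, b, c) = (0, 0, 1/2). In particular g has the unique global minimizer (0, 0, 1/2) with minimum value 2. -/
theorem two_le_abs_sub_two_add_abs (x : ℝ) : 2 ≤ |x - 2| + |x| := by
  calc (2 : ℝ) = |x - (x - 2)| := by norm_num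
    _ ≤ |x - 2| + |x| := by rw [add_comm]; exact abs_sub x (x - 2)

/-- The function
`g(a,b,c) = |a| + |a−b| + |1/2+a−c| + |b| + |b+c−2| + |b+c|` satisfies
`g ≥ 2` everywhere, with equality iff `(a,b,c) = (0,0,1/2)`; in particular
`(0,0,1/2)` is the unique global minimizer, with minimum value `2`. -/
theorem stmt_11 :
    (∀ a b c : ℝ,
      2 ≤ |a| + |a - b| + |1 / 2 + a - c| + |b| + |b + c - 2| + |b + c|) ∧
    (∀ a b c : ℝ,
      (|a| + |a - b| + |1 / 2 + a - c| + |b| + |b + c - 2| + |b + c| = 2) ↔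
        (a = 0 ∧ b = 0 ∧ c = 1 / 2)) := by
  refine ⟨fun a b c => ?_, fun a b c => ⟨fun h => ?_, ?_⟩⟩
  · linarith [abs_nonneg a, abs_nonneg (a - b), abs_nonneg (1 / 2 + a - c), abs_nonneg b,
      two_le_abs_sub_two_add_abs (b + c)]
  · -- The last two terms already contribute 2, so every other term vanishes.
    have hbc := two_le_abs_sub_two_add_abs (b + c)
    have ha : |a| ≤ 0 := by linarith [abs_nonneg (a - b), abs_nonneg (1 / 2 + a - c), abs_nonneg b]
    have hb : |b| ≤ 0 := by linarith [abs_nonneg a, abs_nonneg (a - b), abs_nonneg (1 / 2 + a - c)]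
    have hac : |1 / 2 + a - c| ≤ 0 := by linarith [abs_nonneg a, abs_nonneg (a - b), abs_nonneg b]
    rw [abs_nonpos_iff] at ha hb hac
    exact ⟨ha, hb, by linarith⟩
  · rintro ⟨rfl, rfl, rfl⟩
    norm_num
end

section
/- Fix M ≥ 1, d ≥ 1, N₀ ∈ ℝ, and points x^(1), …, x^(N) ∈ ℝ^M each satisfying x₁^(k) + ⋯ + x_M^(k) = N₀. Let Φ be the N × σ real matrix whose columns are indexed by the multi-indices α ∈ ℕ^M with |α| ≤ d (so σ = C(M + d, d)) and whose entries are Φ_{k,α} = (x^(k))^α. Then the kernel of Φ (acting on coefficient vectors in ℝ^σ) has dimension at least C(M + d − 1, d − 1); equivalently, the rank of Φ is at most C(M + d, d) − C(M + d − 1, d − 1). -/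
/-!
On the hyperplane the affine polynomial `L = x₁ + ⋯ + x_M - N₀` vanishes, so for every polynomial
`q` of total degree `≤ d - 1` the coefficient vector of `q * L`, a polynomial of degree `≤ d` and
hence supported on the columns of `Φ`, lies in the kernel of `Φ`. As `L ≠ 0`, `q ↦ q * L` is
injective, so the kernel has dimension at least `C(M + d - 1, d - 1)`, the dimension of the space
of polynomials of degree `≤ d - 1`. The rank bound is rank–nullity.
-/

open MvPolynomial Module LinearMap

def sumLeEquivOptionSumEq (ι : Type*) [Fintype ι] (D : ℕ) :
    {β : ι → ℕ // ∑ i, β i ≤ D} ≃ {γ : Option ι → ℕ // ∑ o, γ o = D} where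
  toFun β := ⟨fun o => o.elim (D - ∑ i, β.1 i) β.1, by
    rw [Fintype.sum_option]
    simpa using Nat.sub_add_cancel β.2⟩
  invFun γ := ⟨fun i => γ.1 (some i), by
    have := γ.2
    rw [Fintype.sum_option] at this
    exact (Nat.le_add_left _ _).trans_eq this⟩
  left_inv _ := rfl
  right_inv γ := by
    have := γ.2
    rw [Fintype.sum_option] at this
    ext (_ | i)
    · simp only [Option.elim]
      omega
    · rfl

theorem natCard_sum_le_eq_choose (ι : Type*) [Fintype ι] (D : ℕ) :
    Nat.card {β : ι → ℕ // ∑ i, β i ≤ D} = (Fintype.card ι + D).choose D := by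
  classical
  rw [Nat.card_congr ((sumLeEquivOptionSumEq ι D).trans (Sym.equivNatSumOfFintype _ D).symm),
    Nat.card_eq_fintype_card, Sym.card_sym_eq_choose, Fintype.card_option, Nat.add_right_comm,
    Nat.add_sub_cancel]

namespace MvPolynomial

theorem finrank_restrictTotalDegree (ι R : Type*) [Fintype ι] [CommRing R] [Nontrivial R]
    (D : ℕ) :
    finrank R (restrictTotalDegree ι R D) = (Fintype.card ι + D).choose D := by
  rw [← natCard_sum_le_eq_choose]
  refine (finrank_eq_nat_card_basis (basisRestrictSupport R _)).trans ?_
  exact Nat.card_congr <| Finsupp.equivFunOnFinite.subtypeEquiv fun m => by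
    simp [Finsupp.sum_fintype]

section DesignMatrix

variable {R ι τ ν : Type*} [CommRing R] [Fintype ι] [Fintype τ]

noncomputable def coeffVec (idx : τ → ι → ℕ) : MvPolynomial ι R →ₗ[R] τ → R :=
  LinearMap.pi fun a => lcoeff R (Finsupp.equivFunOnFinite.symm (idx a))

def designMatrix (x : ν → ι → R) (idx : τ → ι → ℕ) : Matrix ν τ R :=
  Matrix.of fun k a => ∏ i, x k i ^ idx a i

section Coverage

variable {d : ℕ} {idx : τ → ι → ℕ} (hidx : ∀ β : ι → ℕ, ∑ i, β i ≤ d → ∃ a, idx a = β)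
include hidx

theorem support_subset_image_idx {p : MvPolynomial ι R} (hp : p.totalDegree ≤ d) :
    p.support ⊆ Finset.univ.image fun a => Finsupp.equivFunOnFinite.symm (idx a) := by
  intro m hm
  obtain ⟨a, ha⟩ := hidx m (by simpa [Finsupp.sum_fintype] using (le_totalDegree hm).trans hp)
  exact Finset.mem_image.mpr ⟨a, Finset.mem_univ a, by simp [ha]⟩

theorem eq_zero_of_coeffVec_eq_zero {p : MvPolynomial ι R} (hp : p.totalDegree ≤ d)
    (h : coeffVec idx p = 0) : p = 0 := by
  ext m
  by_contra hm
  obtain ⟨a, -, rfl⟩ := Finset.mem_image.mp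
    (support_subset_image_idx hidx hp (mem_support_iff.mpr hm))
  exact hm (congrFun h a)

theorem eval_eq_sum_coeffVec (hinj : Function.Injective idx) {p : MvPolynomial ι R}
    (hp : p.totalDegree ≤ d) (y : ι → R) :
    eval y p = ∑ a, coeffVec idx p a * ∏ i, y i ^ idx a i := by
  rw [eval_eq', Finset.sum_subset (support_subset_image_idx hidx hp)
      fun m _ hm => by rw [notMem_support_iff.mp hm, zero_mul],
    Finset.sum_image fun a _ b _ h => hinj (by simpa using h)]
  simp [coeffVec]

theorem coeffVec_mem_ker_designMatrix (hinj : Function.Injective idx) {p : MvPolynomial ι R}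
    (hp : p.totalDegree ≤ d) (x : ν → ι → R) (hpx : ∀ k, eval (x k) p = 0) :
    coeffVec idx p ∈ ker (designMatrix x idx).mulVecLin := by
  ext k
  simp [Matrix.mulVec, dotProduct, designMatrix, ← hpx k, eval_eq_sum_coeffVec hidx hinj hp,
    mul_comm]

end Coverage

theorem finrank_restrictTotalDegree_le_finrank_ker_designMatrix {K : Type*} [Field K]
    {d D : ℕ} {idx : τ → ι → ℕ} (hidx : ∀ β : ι → ℕ, ∑ i, β i ≤ d → ∃ a, idx a = β)
    (hinj : Function.Injective idx) (x : ν → ι → K) {L : MvPolynomial ι K} (hL : L ≠ 0)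
    (hLdeg : L.totalDegree + D ≤ d) (hLx : ∀ k, eval (x k) L = 0) :
    finrank K (restrictTotalDegree ι K D) ≤ finrank K (ker (designMatrix x idx).mulVecLin) := by
  have hdeg (q : restrictTotalDegree ι K D) : (q * L : MvPolynomial ι K).totalDegree ≤ d := by
    have := (mem_restrictTotalDegree _ _ _).mp q.2
    exact (totalDegree_mul _ _).trans (by omega)
  let f := (coeffVec idx ∘ₗ mulRight K L ∘ₗ (restrictTotalDegree ι K D).subtype).codRestrict _
    fun q => coeffVec_mem_ker_designMatrix hidx hinj (hdeg q) x fun k => by simp [hLx k]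
  refine finrank_le_finrank_of_injective (f := f) <| (injective_iff_map_eq_zero f).mpr
    fun q hq => Subtype.ext ?_
  have hqL := eq_zero_of_coeffVec_eq_zero hidx (hdeg q) (congrArg Subtype.val hq)
  exact (mul_eq_zero.mp hqL).resolve_right hL

end DesignMatrix

theorem totalDegree_sum_X_sub_C_le {R ι : Type*} [CommRing R] [Nontrivial R] [Fintype ι]
    (c : R) : (∑ i : ι, X i - C c).totalDegree ≤ 1 :=
  (totalDegree_sub_C_le _ _).trans <| totalDegree_finsetSum_le fun i _ => (totalDegree_X i).le

theorem sum_X_sub_C_ne_zero {R ι : Type*} [CommRing R] [Nontrivial R] [Fintype ι] [Nonempty ι]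
    (c : R) : ∑ i : ι, X i - C c ≠ 0 := by
  classical
  intro h
  obtain ⟨i⟩ := ‹Nonempty ι›
  have := congrArg (coeff (Finsupp.single i 1)) h
  simp [coeff_sum, coeff_X, coeff_C, eq_comm (a := (0 : ι →₀ ℕ)),
    Finsupp.single_left_inj one_ne_zero] at this

end MvPolynomial

theorem stmt_13_general (M d N : ℕ) (hM : 1 ≤ M) (hd : 1 ≤ d) (N₀ : ℝ)
    (x : Fin N → Fin M → ℝ) (hx : ∀ k, ∑ i : Fin M, x k i = N₀)
    (idx : Fin ((M + d).choose d) → (Fin M → ℕ))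
    (hidx_inj : Function.Injective idx)
    (hidx_surj : ∀ β : Fin M → ℕ, ∑ i : Fin M, β i ≤ d → ∃ a, idx a = β)
    (Φ : Matrix (Fin N) (Fin ((M + d).choose d)) ℝ)
    (hΦ : ∀ k a, Φ k a = ∏ i : Fin M, x k i ^ idx a i) :
    (M + d - 1).choose (d - 1) ≤ Module.finrank ℝ (LinearMap.ker Φ.mulVecLin) ∧
    Φ.rank ≤ (M + d).choose d - (M + d - 1).choose (d - 1) := by
  obtain rfl : Φ = designMatrix x idx := Matrix.ext hΦ
  have : Nonempty (Fin M) := ⟨⟨0, hM⟩⟩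
  have hker := finrank_restrictTotalDegree_le_finrank_ker_designMatrix (D := d - 1) hidx_surj
    hidx_inj x (sum_X_sub_C_ne_zero N₀)
    (by have := totalDegree_sum_X_sub_C_le (ι := Fin M) N₀; omega) fun k => by simp [hx k]
  rw [finrank_restrictTotalDegree, Fintype.card_fin, ← Nat.add_sub_assoc hd] at hker
  have hrank := (designMatrix x idx).mulVecLin.finrank_range_add_finrank_ker
  rw [finrank_fin_fun] at hrank
  exact ⟨hker, by rw [Matrix.rank]; omega⟩

/-- If the data points `x^(1), …, x^(N) ∈ ℝ^M` all lie on the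
conservation hyperplane `x₁ + ⋯ + x_M = N₀`, and `Φ` is the `N × σ` design
matrix (with `σ = C(M + d, d)`) whose columns, indexed by an enumeration `idx`
of the multi-indices of total degree at most `d`, are the monomial evaluations
`Φ_{k,a} = ∏ i, (x^(k))_i ^ (idx a)_i`, then the kernel of `Φ` has dimension at
least `C(M + d − 1, d − 1)`, equivalently the rank of `Φ` is at most
`C(M + d, d) − C(M + d − 1, d − 1)`. -/
theorem stmt_13 (M d N : ℕ) (hM : 1 ≤ M) (hd : 1 ≤ d) (N₀ : ℝ)
    (x : Fin N → Fin M → ℝ) (hx : ∀ k, ∑ i : Fin M, x k i = N₀)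
    (idx : Fin ((M + d).choose d) → (Fin M → ℕ))
    (hidx_inj : Function.Injective idx)
    (hidx_deg : ∀ a, ∑ i : Fin M, idx a i ≤ d)
    (hidx_surj : ∀ β : Fin M → ℕ, ∑ i : Fin M, β i ≤ d → ∃ a, idx a = β)
    (Φ : Matrix (Fin N) (Fin ((M + d).choose d)) ℝ)
    (hΦ : ∀ k a, Φ k a = ∏ i : Fin M, x k i ^ idx a i) :
    (M + d - 1).choose (d - 1) ≤ Module.finrank ℝ (LinearMap.ker Φ.mulVecLin) ∧
    Φ.rank ≤ (M + d).choose d - (M + d - 1).choose (d - 1) :=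
  stmt_13_general M d N hM hd N₀ x hx idx hidx_inj hidx_surj Φ hΦ
end
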